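/- arXiv:2102.05825 — 5 statements merged into one kernel-verified Lean document; each statement's English description precedes it below -/
import Mathlib

section
/- Let n, a, b be positive integers and c a nonnegative integer, and set t_i = a−1+c(i−1) for i = 1,…,n. Then Σ_{k=0}^{n} Ψ_n(k,a,b,c) = K_{k_{n+2}^{a,b+1,c}}(0, t_1, …, t_n, −(t_1+⋯+t_n)). -/
open Finset

/-- Kostant partition function: the number of nonnegative integer flows on the
multigraph on vertex set `{0, …, n+1}` whose edge `(i,j)` (with `i < j ≤ n+1`) has
multiplicity `mult i j`, such that the net flow at each vertex `v ≤ n+1` is `b v`. -/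
noncomputable def KostantPF (n : ℕ) (mult : ℕ → ℕ → ℕ) (b : ℕ → ℤ) : ℕ :=
  Nat.card {f : ℕ → ℕ → ℕ → ℕ //
    (∀ i j t, f i j t ≠ 0 → t < mult i j ∧ i < j ∧ j ≤ n + 1) ∧
    (∀ v ≤ n + 1,
      (∑ j ∈ Finset.range (n + 2), ∑ t ∈ Finset.range (mult v j), (f v j t : ℤ)) -
      (∑ i ∈ Finset.range (n + 2), ∑ t ∈ Finset.range (mult i v), (f i v t : ℤ)) = b v)}

/-- Edge multiplicities of the graph `k_{n+2}^{a,b,c}` on `{0,…,n+1}`. -/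
def kMult (n a b c : ℕ) : ℕ → ℕ → ℕ := fun i j =>
  if i = 0 ∧ 1 ≤ j ∧ j ≤ n then a
  else if 1 ≤ i ∧ i ≤ n ∧ j = n + 1 then b
  else if 1 ≤ i ∧ i < j ∧ j ≤ n then c
  else 0

/-- The net flow vector `(0, A 1, …, A n, -(A 1 + ⋯ + A n))` on `{0,…,n+1}`. -/
def netflow (n : ℕ) (A : ℕ → ℤ) : ℕ → ℤ := fun v =>
  if v = 0 then 0
  else if v ≤ n then A v
  else -(∑ i ∈ Finset.Icc 1 n, A i)

/-- `tvec a c i = a - 1 + c * (i - 1)`. -/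
def tvec (a c : ℕ) : ℕ → ℤ := fun i => (a : ℤ) - 1 + (c : ℤ) * ((i : ℤ) - 1)

/-- The Morris constant-term product `M_n(a,b,c)`. -/
noncomputable def MorrisM (n a b c : ℕ) : ℝ :=
  ∏ j ∈ Finset.range n,
    (Real.Gamma ((a : ℝ) - 1 + (b : ℝ) + ((n : ℝ) - 1 + (j : ℝ)) * (c : ℝ) / 2) *
      Real.Gamma ((c : ℝ) / 2 + 1)) /
    (Real.Gamma ((a : ℝ) + (j : ℝ) * (c : ℝ) / 2) *
      Real.Gamma ((b : ℝ) + (j : ℝ) * (c : ℝ) / 2) *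
      Real.Gamma (((j : ℝ) + 1) * (c : ℝ) / 2 + 1))

/-- Extend `A : Fin n → ℤ` to `ℕ` so that vertex `v ∈ {1,…,n}` reads `A (v-1)`. -/
def extFin (n : ℕ) (A : Fin n → ℤ) : ℕ → ℤ := fun v =>
  if h : v - 1 < n then A ⟨v - 1, h⟩ else 0

/-- `Ψ_n(k,a,b,c)`: the sum of `K_{k_{n+2}^{a,b,c}}(0, a_1, …, a_n, -(a_1+⋯+a_n))` over
integer vectors `(a_1,…,a_n)` with `a_i ≤ a-1+c(i-1)` for all `i` and with equality
for exactly `n - k` indices `i`. -/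
noncomputable def Psi (n k a b c : ℕ) : ℕ :=
  ∑ᶠ A : Fin n → ℤ,
    if (∀ i : Fin n, A i ≤ (a : ℤ) - 1 + (c : ℤ) * ((i : ℕ) : ℤ)) ∧
       (Finset.univ.filter (fun i : Fin n =>
          A i = (a : ℤ) - 1 + (c : ℤ) * ((i : ℕ) : ℤ))).card = n - k
    then KostantPF n (kMult n a b c) (netflow n (extFin n A)) else 0

/-- The net flow vector `ν(H) = (0, indeg_H(1)-1, …, indeg_H(n)-1, -Σ(indeg_H(v)-1))`. -/
def nuFlow (n : ℕ) (mult : ℕ → ℕ → ℕ) : ℕ → ℤ :=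
  netflow n (fun v => (∑ i ∈ Finset.range (n + 2), (mult i v : ℤ)) - 1)



def outIn (n : ℕ) (mult : ℕ → ℕ → ℕ) (f : ℕ → ℕ → ℕ → ℕ) (v : ℕ) : ℤ :=
  (∑ j ∈ Finset.range (n + 2), ∑ t ∈ Finset.range (mult v j), (f v j t : ℤ)) -
  (∑ i ∈ Finset.range (n + 2), ∑ t ∈ Finset.range (mult i v), (f i v t : ℤ))

def IsFlow (n : ℕ) (mult : ℕ → ℕ → ℕ) (b : ℕ → ℤ) (f : ℕ → ℕ → ℕ → ℕ) : Prop :=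
  (∀ i j t, f i j t ≠ 0 → t < mult i j ∧ i < j ∧ j ≤ n + 1) ∧
  (∀ v ≤ n + 1, outIn n mult f v = b v)

lemma KostantPF_def (n : ℕ) (mult : ℕ → ℕ → ℕ) (b : ℕ → ℤ) :
    KostantPF n mult b = Nat.card {f // IsFlow n mult b f} := rfl

lemma flow_weight {n : ℕ} {mult : ℕ → ℕ → ℕ} {β : ℕ → ℤ} {f : ℕ → ℕ → ℕ → ℕ}
    (hf : IsFlow n mult β f) (w : ℕ → ℤ) :
    ∑ v ∈ range (n+2), w v * β v
      = ∑ i ∈ range (n+2), ∑ j ∈ range (n+2), ∑ t ∈ range (mult i j),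
          (w i - w j) * (f i j t : ℤ) := by
  have h2 : ∀ v ∈ range (n+2), w v * β v = w v * outIn n mult f v := fun v hv => by
    rw [hf.2 v (Nat.lt_succ_iff.mp (mem_range.mp hv))]
  rw [Finset.sum_congr rfl h2]
  unfold outIn
  simp only [mul_sub, Finset.mul_sum, sub_mul, Finset.sum_sub_distrib]
  congr 1
  exact Finset.sum_comm

lemma term_nonneg {n : ℕ} {mult : ℕ → ℕ → ℕ} {f : ℕ → ℕ → ℕ → ℕ}
    (h1 : ∀ i j t, f i j t ≠ 0 → t < mult i j ∧ i < j ∧ j ≤ n + 1)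
    {w : ℕ → ℤ} (hw : ∀ i j : ℕ, i < j → w j ≤ w i) (i j t : ℕ) :
    0 ≤ (w i - w j) * (f i j t : ℤ) := by
  rcases eq_or_ne (f i j t) 0 with h | h
  · simp [h]
  · exact mul_nonneg (sub_nonneg.2 (hw _ _ (h1 i j t h).2.1)) (by positivity)

/-- prefix sums of the netflow vector of a flow are nonnegative -/
lemma flow_prefix {n : ℕ} {mult : ℕ → ℕ → ℕ} {β : ℕ → ℤ} {f : ℕ → ℕ → ℕ → ℕ}
    (hf : IsFlow n mult β f) {m : ℕ} (hm : m ≤ n + 1) :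
    0 ≤ ∑ v ∈ range (m+1), β v := by
  have hw : ∀ i j : ℕ, i < j → (if j ≤ m then (1:ℤ) else 0) ≤ (if i ≤ m then 1 else 0) := by
    intro i j hij; split_ifs with h h' h' <;> omega
  have := flow_weight hf (fun v => if v ≤ m then (1:ℤ) else 0)
  have hL : ∑ v ∈ range (n+2), (if v ≤ m then (1:ℤ) else 0) * β v
      = ∑ v ∈ range (m+1), β v := by
    have : ∀ v ∈ range (n+2), (if v ≤ m then (1:ℤ) else 0) * β v
        = if v ≤ m then β v else 0 := by intro v _; split_ifs <;> simp
    rw [Finset.sum_congr rfl this, ← Finset.sum_filter]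
    congr 1
    ext x
    simp only [mem_filter, mem_range]
    omega
  rw [← hL, this]
  refine Finset.sum_nonneg fun i _ => Finset.sum_nonneg fun j _ => Finset.sum_nonneg fun t _ => ?_
  exact term_nonneg hf.1 hw i j t

lemma flow_total {n : ℕ} {mult : ℕ → ℕ → ℕ} {β : ℕ → ℤ} {f : ℕ → ℕ → ℕ → ℕ}
    (hf : IsFlow n mult β f) :
    ∑ i ∈ range (n+2), ∑ j ∈ range (n+2), ∑ t ∈ range (mult i j), (f i j t : ℤ)
      ≤ ∑ v ∈ range (n+2), (-(v:ℤ)) * β v := by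
  rw [flow_weight hf (fun v => -(v:ℤ))]
  refine Finset.sum_le_sum fun i _ => Finset.sum_le_sum fun j _ =>
    Finset.sum_le_sum fun t _ => ?_
  rcases eq_or_ne (f i j t) 0 with h | h
  · simp [h]
  · have hij := (hf.1 i j t h).2.1
    have h1 : (1:ℤ) ≤ (-(i:ℤ)) - (-(j:ℤ)) := by
      have : (i:ℤ) + 1 ≤ (j:ℤ) := by exact_mod_cast hij
      linarith
    calc (f i j t : ℤ) = 1 * (f i j t : ℤ) := (one_mul _).symm
      _ ≤ ((-(i:ℤ)) - (-(j:ℤ))) * (f i j t : ℤ) :=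
          mul_le_mul_of_nonneg_right h1 (by positivity)

lemma flow_entry_le {n : ℕ} {mult : ℕ → ℕ → ℕ} {β : ℕ → ℤ} {f : ℕ → ℕ → ℕ → ℕ}
    (hf : IsFlow n mult β f) (i j t : ℕ) :
    (f i j t : ℤ) ≤ ∑ v ∈ range (n+2), (-(v:ℤ)) * β v := by
  have hw : ∀ i j : ℕ, i < j → (-(j:ℤ)) ≤ (-(i:ℤ)) := by
    intro i j hij; have : (i:ℤ) ≤ j := by exact_mod_cast hij.le
    linarith
  rcases eq_or_ne (f i j t) 0 with h | h
  · rw [h, flow_weight hf]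
    push_cast
    exact Finset.sum_nonneg fun i _ => Finset.sum_nonneg fun j _ =>
      Finset.sum_nonneg fun t _ => term_nonneg hf.1 hw i j t
  · obtain ⟨ht, hij, hj⟩ := hf.1 i j t h
    refine le_trans ?_ (flow_total hf)
    have h3 : (f i j t : ℤ) ≤ ∑ t' ∈ range (mult i j), (f i j t' : ℤ) :=
      Finset.single_le_sum (f := fun t' => (f i j t' : ℤ)) (fun _ _ => by positivity) (mem_range.2 ht)
    have h2 : ∑ t' ∈ range (mult i j), (f i j t' : ℤ)
        ≤ ∑ j' ∈ range (n+2), ∑ t' ∈ range (mult i j'), (f i j' t' : ℤ) :=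
      Finset.single_le_sum (f := fun j' => ∑ t' ∈ range (mult i j'), (f i j' t' : ℤ))
        (fun _ _ => Finset.sum_nonneg fun _ _ => by positivity)
        (mem_range.2 (by omega))
    have h1 : ∑ j' ∈ range (n+2), ∑ t' ∈ range (mult i j'), (f i j' t' : ℤ)
        ≤ ∑ i' ∈ range (n+2), ∑ j' ∈ range (n+2), ∑ t' ∈ range (mult i' j'), (f i' j' t' : ℤ) :=
      Finset.single_le_sum
        (f := fun i' => ∑ j' ∈ range (n+2), ∑ t' ∈ range (mult i' j'), (f i' j' t' : ℤ))
        (fun _ _ => Finset.sum_nonneg fun _ _ => Finset.sum_nonneg fun _ _ => by positivity)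
        (mem_range.2 (by omega))
    linarith

lemma flow_finite (n : ℕ) (mult : ℕ → ℕ → ℕ) (β : ℕ → ℤ) :
    Finite {f // IsFlow n mult β f} := by
  set N : ℕ := (∑ v ∈ range (n+2), (-(v:ℤ)) * β v).toNat with hN
  set M : ℕ := (range (n+2)).sup (fun i => (range (n+2)).sup (fun j => mult i j)) with hM
  have key : ∀ (f : {f // IsFlow n mult β f}) (i j t : ℕ), f.1 i j t ≤ N := by
    intro f i j t
    have h1 := flow_entry_le f.2 i j t
    have h2 : (f.1 i j t : ℤ) ≤ (N:ℤ) := le_trans h1 (Int.self_le_toNat _)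
    exact_mod_cast h2
  apply Finite.of_injective (fun f : {f // IsFlow n mult β f} =>
    (fun (i : Fin (n+2)) (j : Fin (n+2)) (t : Fin M) =>
      (⟨f.1 i j t, Nat.lt_succ_of_le (key f i j t)⟩ : Fin (N+1))))
  intro f g h
  ext i j t
  by_cases hc : t < mult i j ∧ i < j ∧ j ≤ n + 1
  · have hi : i < n + 2 := by omega
    have hj : j < n + 2 := by omega
    have hij : mult i j ≤ M := by
      rw [hM]
      exact le_trans (Finset.le_sup (f := fun j' => mult i j') (mem_range.2 hj))
        (Finset.le_sup (f := fun i' => (range (n+2)).sup (fun j' => mult i' j')) (mem_range.2 hi))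
    have ht : t < M := lt_of_lt_of_le hc.1 hij
    have := congrFun (congrFun (congrFun h ⟨i, hi⟩) ⟨j, hj⟩) ⟨t, ht⟩
    simpa using this
  · have h1 : f.1 i j t = 0 := by
      by_contra hne; exact hc (f.2.1 i j t hne)
    have h2 : g.1 i j t = 0 := by
      by_contra hne; exact hc (g.2.1 i j t hne)
    rw [h1, h2]


lemma kMult_n1 {n a b c i : ℕ} (h1 : 1 ≤ i) (h2 : i ≤ n) : kMult n a b c i (n+1) = b := by
  unfold kMult; split_ifs <;> omega

lemma kMult_last_out {n a b c i : ℕ} (h : ¬(1 ≤ i ∧ i ≤ n)) : kMult n a b c i (n+1) = 0 := by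
  unfold kMult; split_ifs <;> omega

lemma kMult_ne_last {n a c i j : ℕ} (b b' : ℕ) (h : j ≠ n+1) :
    kMult n a b c i j = kMult n a b' c i j := by
  unfold kMult; split_ifs <;> omega

lemma netflow_zero (n : ℕ) (A : ℕ → ℤ) : netflow n A 0 = 0 := rfl

lemma netflow_mid {n v : ℕ} (A : ℕ → ℤ) (h1 : 1 ≤ v) (h2 : v ≤ n) : netflow n A v = A v := by
  unfold netflow; rw [if_neg (by omega), if_pos h2]

lemma netflow_last {n : ℕ} (A : ℕ → ℤ) : netflow n A (n+1) = -(∑ i ∈ Finset.Icc 1 n, A i) := by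
  unfold netflow; rw [if_neg (by omega), if_neg (by omega)]

lemma sum_Icc_one (n : ℕ) (g : ℕ → ℤ) : ∑ v ∈ Icc 1 n, g v = ∑ j ∈ range n, g (j+1) := by
  induction n with
  | zero => simp
  | succ m ih => rw [Finset.sum_Icc_succ_top (by omega), ih, Finset.sum_range_succ]

def combineF (n b : ℕ) (g : ℕ → ℕ → ℕ → ℕ) (φ : ℕ → ℕ) : ℕ → ℕ → ℕ → ℕ :=
  fun i j s => if j = n+1 ∧ s = b ∧ 1 ≤ i ∧ i ≤ n then φ i else g i j s


lemma combine_outIn (n a b c : ℕ) (g : ℕ → ℕ → ℕ → ℕ) (φ : ℕ → ℕ) (v : ℕ) :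
    outIn n (kMult n a (b+1) c) (combineF n b g φ) v
      = outIn n (kMult n a b c) g v
        + (if 1 ≤ v ∧ v ≤ n then (φ v : ℤ) else 0)
        - (if v = n+1 then ∑ i ∈ Icc 1 n, (φ i : ℤ) else 0) := by
  have hcol : ∀ i : ℕ, ∑ s ∈ range (kMult n a (b+1) c i (n+1)), ((combineF n b g φ) i (n+1) s : ℤ)
      = (∑ s ∈ range (kMult n a b c i (n+1)), (g i (n+1) s : ℤ))
        + (if 1 ≤ i ∧ i ≤ n then (φ i : ℤ) else 0) := by
    intro i
    by_cases hc : 1 ≤ i ∧ i ≤ n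
    · rw [if_pos hc, kMult_n1 hc.1 hc.2, kMult_n1 hc.1 hc.2, Finset.sum_range_succ]
      have h2 : ∀ s ∈ range b, ((combineF n b g φ) i (n+1) s : ℤ) = (g i (n+1) s : ℤ) := by
        intro s hs
        have hs' : s < b := mem_range.mp hs
        simp only [combineF]
        rw [if_neg (by omega)]
      rw [Finset.sum_congr rfl h2]
      have h3 : ((combineF n b g φ) i (n+1) b : ℤ) = (φ i : ℤ) := by
        simp [combineF, hc.1, hc.2]
      rw [h3]
    · rw [if_neg hc, kMult_last_out hc, kMult_last_out hc]; simp
  have hoff : ∀ i j : ℕ, j ≠ n + 1 →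
      ∑ s ∈ range (kMult n a (b+1) c i j), ((combineF n b g φ) i j s : ℤ)
        = ∑ s ∈ range (kMult n a b c i j), (g i j s : ℤ) := by
    intro i j hj
    rw [kMult_ne_last (b+1) b hj]
    refine Finset.sum_congr rfl fun s _ => ?_
    simp only [combineF]
    rw [if_neg (by tauto)]
  have hout : ∑ j ∈ range (n+2), ∑ s ∈ range (kMult n a (b+1) c v j), ((combineF n b g φ) v j s : ℤ)
      = (∑ j ∈ range (n+2), ∑ s ∈ range (kMult n a b c v j), (g v j s : ℤ))
        + (if 1 ≤ v ∧ v ≤ n then (φ v : ℤ) else 0) := by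
    rw [Finset.sum_range_succ]
    conv_rhs => rw [Finset.sum_range_succ]
    rw [Finset.sum_congr rfl (fun j hj => hoff v j (by simp at hj; omega)), hcol v]
    ring
  have hin : ∑ i ∈ range (n+2), ∑ s ∈ range (kMult n a (b+1) c i v), ((combineF n b g φ) i v s : ℤ)
      = (∑ i ∈ range (n+2), ∑ s ∈ range (kMult n a b c i v), (g i v s : ℤ))
        + (if v = n+1 then ∑ i ∈ Icc 1 n, (φ i : ℤ) else 0) := by
    by_cases hv1 : v = n+1
    · subst hv1
      rw [if_pos rfl, Finset.sum_congr rfl (fun i _ => hcol i), Finset.sum_add_distrib]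
      congr 1
      rw [← Finset.sum_filter]
      congr 1
      ext x
      simp only [mem_filter, mem_range, mem_Icc]
      omega
    · rw [if_neg hv1, Finset.sum_congr rfl (fun i _ => hoff i v hv1), add_zero]
  unfold outIn
  rw [hout, hin]
  ring

def phiA (n a c : ℕ) (A : Fin n → ℤ) : ℕ → ℕ := fun v => (tvec a c v - extFin n A v).toNat

lemma kMult_mono_b {n a b c i j : ℕ} : kMult n a b c i j ≤ kMult n a (b+1) c i j := by
  unfold kMult; split_ifs <;> omega

lemma extFin_eq {n v : ℕ} (A : Fin n → ℤ) (h1 : 1 ≤ v) (h2 : v ≤ n) :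
    extFin n A v = A ⟨v - 1, by omega⟩ := dif_pos (by omega)

lemma extFin_fin {n : ℕ} (A : Fin n → ℤ) (i : Fin n) : extFin n A ((i : ℕ) + 1) = A i := by
  rw [extFin_eq A (by omega) (by omega)]
  congr 1

lemma tvec_fin (a c : ℕ) {n : ℕ} (i : Fin n) :
    tvec a c ((i : ℕ) + 1) = (a : ℤ) - 1 + (c : ℤ) * ((i : ℕ) : ℤ) := by
  unfold tvec; push_cast; ring

section Fiber

variable {n a b c : ℕ} (A : Fin n → ℤ)

lemma hphi (hA : ∀ i : Fin n, A i ≤ (a : ℤ) - 1 + (c : ℤ) * ((i : ℕ) : ℤ)) (v : ℕ) (h1 : 1 ≤ v) (h2 : v ≤ n) :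
    (phiA n a c A v : ℤ) = tvec a c v - extFin n A v := by
  apply Int.toNat_of_nonneg
  rw [extFin_eq A h1 h2]
  have := hA ⟨v - 1, by omega⟩
  have hc : ((v - 1 : ℕ) : ℤ) = (v : ℤ) - 1 := by omega
  unfold tvec
  simp only [hc] at this ⊢
  linarith

lemma corr_id (hA : ∀ i : Fin n, A i ≤ (a : ℤ) - 1 + (c : ℤ) * ((i : ℕ) : ℤ)) (v : ℕ) (hv : v ≤ n + 1) :
    netflow n (extFin n A) v
      + (if 1 ≤ v ∧ v ≤ n then (phiA n a c A v : ℤ) else 0)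
      - (if v = n+1 then ∑ i ∈ Icc 1 n, (phiA n a c A i : ℤ) else 0)
    = netflow n (tvec a c) v := by
  rcases Nat.eq_zero_or_pos v with h0 | h1
  · subst h0
    rw [if_neg (by omega), if_neg (by omega), netflow_zero, netflow_zero]
    ring
  rcases Nat.lt_or_ge v (n+1) with hmid | hlast
  · have h2 : v ≤ n := by omega
    rw [if_pos ⟨h1, h2⟩, if_neg (by omega), netflow_mid _ h1 h2, netflow_mid _ h1 h2,
      hphi A hA v h1 h2]
    ring
  · have hv1 : v = n + 1 := by omega
    subst hv1
    rw [if_neg (by omega), if_pos rfl, netflow_last, netflow_last]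
    have : ∀ i ∈ Icc 1 n, (phiA n a c A i : ℤ) = tvec a c i - extFin n A i := by
      intro i hi
      exact hphi A hA i (mem_Icc.mp hi).1 (mem_Icc.mp hi).2
    rw [Finset.sum_congr rfl this, Finset.sum_sub_distrib]
    ring

/-- backward map: a `b`-flow with netflow `extFin A` gives a `(b+1)`-flow with netflow `tvec`. -/
lemma combine_isFlow (hA : ∀ i : Fin n, A i ≤ (a : ℤ) - 1 + (c : ℤ) * ((i : ℕ) : ℤ)) (g : ℕ → ℕ → ℕ → ℕ)
    (hg : IsFlow n (kMult n a b c) (netflow n (extFin n A)) g) :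
    IsFlow n (kMult n a (b+1) c) (netflow n (tvec a c))
      (combineF n b g (phiA n a c A)) := by
  constructor
  · intro i j s hne
    unfold combineF at hne
    by_cases hsp : j = n+1 ∧ s = b ∧ 1 ≤ i ∧ i ≤ n
    · obtain ⟨hj, hs, hi1, hi2⟩ := hsp
      subst hj; subst hs
      rw [kMult_n1 hi1 hi2]
      exact ⟨by omega, by omega, by omega⟩
    · rw [if_neg hsp] at hne
      obtain ⟨hs, hij, hjn⟩ := hg.1 i j s hne
      exact ⟨lt_of_lt_of_le hs kMult_mono_b, hij, hjn⟩
  · intro v hv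
    rw [combine_outIn n a b c g (phiA n a c A) v, hg.2 v hv]
    exact corr_id A hA v hv

end Fiber

def stripF (n b : ℕ) (f : ℕ → ℕ → ℕ → ℕ) : ℕ → ℕ → ℕ → ℕ :=
  fun i j s => if j = n+1 ∧ s = b then 0 else f i j s

section Fiber2

variable {n a b c : ℕ} (A : Fin n → ℤ)

lemma kMult_col_le {n a b c i : ℕ} : kMult n a b c i (n+1) ≤ b := by
  unfold kMult; split_ifs <;> omega

lemma strip_combine (g : ℕ → ℕ → ℕ → ℕ) (φ : ℕ → ℕ)
    (hg : ∀ i j s, g i j s ≠ 0 → s < kMult n a b c i j ∧ i < j ∧ j ≤ n + 1) :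
    stripF n b (combineF n b g φ) = g := by
  funext i j s
  unfold stripF combineF
  by_cases hjb : j = n+1 ∧ s = b
  · rw [if_pos hjb]
    obtain ⟨hj, hs⟩ := hjb
    by_contra hne
    obtain ⟨hlt, -, -⟩ := hg i j s (Ne.symm hne)
    rw [hj, hs] at hlt
    exact absurd hlt (not_lt.mpr kMult_col_le)
  · rw [if_neg hjb, if_neg (by tauto)]

lemma decomp (f : ℕ → ℕ → ℕ → ℕ)
    (h1 : ∀ i j s, f i j s ≠ 0 → s < kMult n a (b+1) c i j ∧ i < j ∧ j ≤ n+1)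
    (hφ : ∀ v, 1 ≤ v → v ≤ n → f v (n+1) b = phiA n a c A v) :
    f = combineF n b (stripF n b f) (phiA n a c A) := by
  funext i j s
  unfold combineF stripF
  by_cases hsp : j = n+1 ∧ s = b ∧ 1 ≤ i ∧ i ≤ n
  · rw [if_pos hsp]
    obtain ⟨hj, hs, hi1, hi2⟩ := hsp
    rw [hj, hs, hφ i hi1 hi2]
  · rw [if_neg hsp]
    by_cases hjb : j = n+1 ∧ s = b
    · rw [if_pos hjb]
      obtain ⟨hj, hs⟩ := hjb
      by_contra hne
      obtain ⟨hlt, -, -⟩ := h1 i j s hne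
      have hi : ¬(1 ≤ i ∧ i ≤ n) := by tauto
      rw [hj, kMult_last_out hi] at hlt
      omega
    · rw [if_neg hjb]

lemma strip_cond1 (f : ℕ → ℕ → ℕ → ℕ)
    (h1 : ∀ i j s, f i j s ≠ 0 → s < kMult n a (b+1) c i j ∧ i < j ∧ j ≤ n+1) :
    ∀ i j s, stripF n b f i j s ≠ 0 →
      s < kMult n a b c i j ∧ i < j ∧ j ≤ n + 1 := by
  intro i j s hne
  unfold stripF at hne
  by_cases hjb : j = n+1 ∧ s = b
  · rw [if_pos hjb] at hne; exact absurd rfl hne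
  · rw [if_neg hjb] at hne
    obtain ⟨hs, hij, hjn⟩ := h1 i j s hne
    refine ⟨?_, hij, hjn⟩
    by_cases hj2 : j = n+1
    · subst hj2
      by_cases hi : 1 ≤ i ∧ i ≤ n
      · rw [kMult_n1 hi.1 hi.2] at hs ⊢
        have : s ≠ b := fun h => hjb ⟨rfl, h⟩
        omega
      · rw [kMult_last_out hi] at hs; omega
    · rw [← kMult_ne_last b (b+1) hj2] at hs; exact hs

lemma strip_isFlow (hA : ∀ i : Fin n, A i ≤ (a : ℤ) - 1 + (c : ℤ) * ((i : ℕ) : ℤ))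
    (f : ℕ → ℕ → ℕ → ℕ)
    (hf : IsFlow n (kMult n a (b+1) c) (netflow n (tvec a c)) f)
    (hval : ∀ v, 1 ≤ v → v ≤ n → (f v (n+1) b : ℤ) = tvec a c v - extFin n A v) :
    IsFlow n (kMult n a b c) (netflow n (extFin n A)) (stripF n b f) := by
  have hφ : ∀ v, 1 ≤ v → v ≤ n → f v (n+1) b = phiA n a c A v := by
    intro v h1 h2
    have h3 := (hval v h1 h2).trans (hphi A hA v h1 h2).symm
    exact_mod_cast h3
  refine ⟨strip_cond1 f hf.1, fun v hv => ?_⟩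
  have hkey := combine_outIn n a b c (stripF n b f) (phiA n a c A) v
  rw [← decomp A f hf.1 hφ, hf.2 v hv] at hkey
  have hcorr := corr_id A hA v hv
  linarith
end Fiber2

lemma fiber_card {n a b c : ℕ} (A : Fin n → ℤ)
    (hA : ∀ i : Fin n, A i ≤ (a : ℤ) - 1 + (c : ℤ) * ((i : ℕ) : ℤ)) :
    Nat.card {F : {f // IsFlow n (kMult n a (b+1) c) (netflow n (tvec a c)) f} //
        (fun i : Fin n => tvec a c ((i : ℕ)+1) - (F.1 ((i : ℕ)+1) (n+1) b : ℤ)) = A}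
      = Nat.card {g // IsFlow n (kMult n a b c) (netflow n (extFin n A)) g} := by
  have hval : ∀ (F : {f // IsFlow n (kMult n a (b+1) c) (netflow n (tvec a c)) f})
      (_ : (fun i : Fin n => tvec a c ((i : ℕ)+1) - (F.1 ((i : ℕ)+1) (n+1) b : ℤ)) = A)
      (v : ℕ), 1 ≤ v → v ≤ n → (F.1 v (n+1) b : ℤ) = tvec a c v - extFin n A v := by
    intro F hfib v h1 h2
    have h := congrFun hfib ⟨v - 1, by omega⟩
    simp only at h
    have hv : v - 1 + 1 = v := by omega
    rw [hv] at h
    rw [extFin_eq A h1 h2]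
    linarith
  have hφof : ∀ (F : {f // IsFlow n (kMult n a (b+1) c) (netflow n (tvec a c)) f})
      (_ : (fun i : Fin n => tvec a c ((i : ℕ)+1) - (F.1 ((i : ℕ)+1) (n+1) b : ℤ)) = A)
      (v : ℕ), 1 ≤ v → v ≤ n → F.1 v (n+1) b = phiA n a c A v := by
    intro F hfib v h1 h2
    have h3 := (hval F hfib v h1 h2).trans (hphi A hA v h1 h2).symm
    exact_mod_cast h3
  apply Nat.card_congr
  refine ⟨fun F => ⟨stripF n b F.1.1, strip_isFlow A hA F.1.1 F.1.2 (hval F.1 F.2)⟩,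
    fun G => ⟨⟨combineF n b G.1 (phiA n a c A), combine_isFlow A hA G.1 G.2⟩, ?_⟩, ?_, ?_⟩
  · funext i
    simp only
    have hsp : (n:ℕ)+1 = n+1 ∧ b = b ∧ 1 ≤ (i:ℕ)+1 ∧ (i:ℕ)+1 ≤ n :=
      ⟨rfl, rfl, by omega, by omega⟩
    have hcv : combineF n b G.1 (phiA n a c A) ((i:ℕ)+1) (n+1) b = phiA n a c A ((i:ℕ)+1) := by
      unfold combineF; rw [if_pos hsp]
    rw [hcv, hphi A hA ((i:ℕ)+1) (by omega) (by omega), extFin_fin A i]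
    ring
  · intro F
    apply Subtype.ext
    apply Subtype.ext
    exact (decomp A F.1.1 F.1.2.1 (hφof F.1 F.2)).symm
  · intro G
    apply Subtype.ext
    exact strip_combine G.1 (phiA n a c A) G.2.1

lemma fiber_empty {n a b c : ℕ} (A : Fin n → ℤ)
    (hA : ¬ ∀ i : Fin n, A i ≤ (a : ℤ) - 1 + (c : ℤ) * ((i : ℕ) : ℤ)) :
    Nat.card {F : {f // IsFlow n (kMult n a (b+1) c) (netflow n (tvec a c)) f} //
        (fun i : Fin n => tvec a c ((i : ℕ)+1) - (F.1 ((i : ℕ)+1) (n+1) b : ℤ)) = A} = 0 := by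
  rw [Nat.card_eq_zero]
  left
  constructor
  rintro ⟨F, hfib⟩
  push_neg at hA
  obtain ⟨i, hi⟩ := hA
  have h := congrFun hfib i
  rw [tvec_fin a c i] at h
  have : (0:ℤ) ≤ (F.1 ((i:ℕ)+1) (n+1) b : ℤ) := by positivity
  omega

lemma prefix_le_S {n a c : ℕ} (β : ℕ → ℤ)
    (hβ0 : β 0 ≤ (a:ℤ))
    (hβ : ∀ u, 1 ≤ u → u ≤ n → β u ≤ (a:ℤ) + c * u) {m : ℕ} (hm : m ≤ n) :
    ∑ u ∈ range (m+1), β u ≤ ∑ v ∈ range (n+2), ((a:ℤ) + c * v) := by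
  calc ∑ u ∈ range (m+1), β u ≤ ∑ u ∈ range (m+1), ((a:ℤ) + c * u) := by
        refine Finset.sum_le_sum fun u hu => ?_
        rcases Nat.eq_zero_or_pos u with h0 | h1
        · subst h0; simpa using hβ0
        · exact hβ u h1 (by simp at hu; omega)
    _ ≤ ∑ v ∈ range (n+2), ((a:ℤ) + c * v) := by
        refine Finset.sum_le_sum_of_subset_of_nonneg
          (Finset.range_subset_range.mpr (by omega)) fun v _ _ => by positivity

lemma netflow_extFin_le {n a c : ℕ} (A : Fin n → ℤ)
    (hA : ∀ i : Fin n, A i ≤ (a : ℤ) - 1 + (c : ℤ) * ((i : ℕ) : ℤ))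
    (u : ℕ) (h1 : 1 ≤ u) (h2 : u ≤ n) : netflow n (extFin n A) u ≤ (a:ℤ) + c * u := by
  rw [netflow_mid _ h1 h2, extFin_eq A h1 h2]
  have := hA ⟨u - 1, by omega⟩
  simp only at this
  have hc : (c:ℤ) * ((u - 1 : ℕ) : ℤ) = (c:ℤ) * ((u : ℤ) - 1) := by
    congr 1; omega
  rw [hc] at this
  have hcn : (0:ℤ) ≤ c := by positivity
  nlinarith

lemma netflow_tvec_le {n a c : ℕ} (u : ℕ) (h1 : 1 ≤ u) (h2 : u ≤ n) :
    netflow n (tvec a c) u ≤ (a:ℤ) + c * u := by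
  rw [netflow_mid _ h1 h2]
  unfold tvec
  have hcn : (0:ℤ) ≤ c := by positivity
  have : (u:ℤ) - 1 ≤ (u:ℤ) := by omega
  nlinarith

lemma support_box {n a b c : ℕ} (A : Fin n → ℤ)
    (hA : ∀ i : Fin n, A i ≤ (a:ℤ) - 1 + (c:ℤ) * ((i:ℕ):ℤ))
    (hne : Nonempty {f // IsFlow n (kMult n a b c) (netflow n (extFin n A)) f}) :
    A ∈ Finset.Icc (fun _ : Fin n => -(∑ v ∈ range (n+2), ((a:ℤ) + c*v)))
        (fun i : Fin n => (a:ℤ) - 1 + (c:ℤ) * ((i:ℕ):ℤ)) := by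
  obtain ⟨f, hf⟩ := hne
  rw [Finset.mem_Icc]
  constructor
  · intro i
    show -(∑ v ∈ range (n+2), ((a:ℤ) + c*v)) ≤ A i
    have hβ : netflow n (extFin n A) ((i:ℕ)+1) = A i := by
      rw [netflow_mid _ (by omega) (by omega), extFin_fin A i]
    have hp2 : 0 ≤ ∑ u ∈ range ((i:ℕ)+1+1), netflow n (extFin n A) u :=
      flow_prefix hf (by omega)
    have hsplit : ∑ u ∈ range ((i:ℕ)+1+1), netflow n (extFin n A) u
        = (∑ u ∈ range ((i:ℕ)+1), netflow n (extFin n A) u) + A i := by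
      rw [Finset.sum_range_succ, hβ]
    have hle : ∑ u ∈ range ((i:ℕ)+1), netflow n (extFin n A) u
        ≤ ∑ v ∈ range (n+2), ((a:ℤ) + c*v) := by
      refine prefix_le_S _ (by rw [netflow_zero]; positivity)
        (netflow_extFin_le A hA) (by omega)
    linarith
  · intro i
    exact hA i

lemma extra_bound {n a b c : ℕ} {f : ℕ → ℕ → ℕ → ℕ}
    (hf : IsFlow n (kMult n a (b+1) c) (netflow n (tvec a c)) f)
    {v : ℕ} (h1 : 1 ≤ v) (h2 : v ≤ n) :
    (f v (n+1) b : ℤ) ≤ ∑ u ∈ range (v+1), netflow n (tvec a c) u := by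
  set w : ℕ → ℤ := fun u => if u ≤ v then (1:ℤ) else 0 with hwdef
  have hw : ∀ i j : ℕ, i < j → w j ≤ w i := by
    intro i j hij; simp only [hwdef]; split_ifs <;> omega
  have hwt := flow_weight hf w
  have hL : ∑ u ∈ range (n+2), w u * netflow n (tvec a c) u
      = ∑ u ∈ range (v+1), netflow n (tvec a c) u := by
    have h : ∀ u ∈ range (n+2), w u * netflow n (tvec a c) u
        = if u ≤ v then netflow n (tvec a c) u else 0 := by
      intro u _; simp only [hwdef]; split_ifs <;> simp
    rw [Finset.sum_congr rfl h, ← Finset.sum_filter]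
    congr 1
    ext x
    simp only [mem_filter, mem_range]
    omega
  rw [hL] at hwt
  rw [hwt]
  have hnn := term_nonneg hf.1 hw
  have hb : b ∈ range (kMult n a (b+1) c v (n+1)) := by
    rw [kMult_n1 h1 h2]; simp
  have t3 : (w v - w (n+1)) * (f v (n+1) b : ℤ)
      ≤ ∑ t ∈ range (kMult n a (b+1) c v (n+1)), (w v - w (n+1)) * (f v (n+1) t : ℤ) :=
    Finset.single_le_sum (f := fun t => (w v - w (n+1)) * (f v (n+1) t : ℤ))
      (fun t _ => hnn v (n+1) t) hb
  have t2 : ∑ t ∈ range (kMult n a (b+1) c v (n+1)), (w v - w (n+1)) * (f v (n+1) t : ℤ)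
      ≤ ∑ j ∈ range (n+2), ∑ t ∈ range (kMult n a (b+1) c v j), (w v - w j) * (f v j t : ℤ) :=
    Finset.single_le_sum
      (f := fun j => ∑ t ∈ range (kMult n a (b+1) c v j), (w v - w j) * (f v j t : ℤ))
      (fun j _ => Finset.sum_nonneg fun t _ => hnn v j t) (mem_range.mpr (by omega))
  have t1 : ∑ j ∈ range (n+2), ∑ t ∈ range (kMult n a (b+1) c v j), (w v - w j) * (f v j t : ℤ)
      ≤ ∑ i ∈ range (n+2), ∑ j ∈ range (n+2), ∑ t ∈ range (kMult n a (b+1) c i j),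
          (w i - w j) * (f i j t : ℤ) :=
    Finset.single_le_sum
      (f := fun i => ∑ j ∈ range (n+2), ∑ t ∈ range (kMult n a (b+1) c i j),
          (w i - w j) * (f i j t : ℤ))
      (fun i _ => Finset.sum_nonneg fun j _ => Finset.sum_nonneg fun t _ => hnn i j t)
      (mem_range.mpr (by omega))
  have hwv : w v = 1 := by simp [hwdef]
  have hwn1 : w (n+1) = 0 := by simp only [hwdef]; rw [if_neg (by omega)]
  rw [hwv] at t3 t2 t1
  rw [hwn1] at t3 t2
  simp only [sub_zero, one_mul] at t3 t2
  linarith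


theorem stmt4 (n a b c : ℕ) (hn : 1 ≤ n) (ha : 1 ≤ a) (hb : 1 ≤ b) :
    ∑ k ∈ Finset.range (n + 1), Psi n k a b c =
      KostantPF n (kMult n a (b + 1) c) (netflow n (tvec a c)) := by
  classical
  set S : ℤ := ∑ v ∈ range (n+2), ((a:ℤ) + c*v) with hS
  set box : Finset (Fin n → ℤ) :=
    Finset.Icc (fun _ => -S) (fun i : Fin n => (a:ℤ) - 1 + (c:ℤ) * ((i:ℕ):ℤ)) with hbox
  clear_value S box
  -- Step A: each Psi is a finite sum over box
  have hpsi : ∀ k, Psi n k a b c = ∑ A ∈ box,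
      (if (∀ i : Fin n, A i ≤ (a : ℤ) - 1 + (c : ℤ) * ((i : ℕ) : ℤ)) ∧
          (Finset.univ.filter (fun i : Fin n =>
            A i = (a : ℤ) - 1 + (c : ℤ) * ((i : ℕ) : ℤ))).card = n - k
        then KostantPF n (kMult n a b c) (netflow n (extFin n A)) else 0) := by
    intro k
    apply finsum_eq_sum_of_support_subset
    intro A hA
    simp only [Function.mem_support] at hA
    by_cases hcond : (∀ i : Fin n, A i ≤ (a : ℤ) - 1 + (c : ℤ) * ((i : ℕ) : ℤ)) ∧
        (Finset.univ.filter (fun i : Fin n =>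
          A i = (a : ℤ) - 1 + (c : ℤ) * ((i : ℕ) : ℤ))).card = n - k
    · rw [if_pos hcond, KostantPF_def] at hA
      rw [Finset.mem_coe, hbox, hS]
      exact support_box A hcond.1 (Nat.card_ne_zero.mp hA).1
    · rw [if_neg hcond] at hA; exact absurd rfl hA
  -- Step B: sum over k collapses
  have hB : ∑ k ∈ Finset.range (n + 1), Psi n k a b c = ∑ A ∈ box,
      (if (∀ i : Fin n, A i ≤ (a : ℤ) - 1 + (c : ℤ) * ((i : ℕ) : ℤ))
        then KostantPF n (kMult n a b c) (netflow n (extFin n A)) else 0) := by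
    rw [Finset.sum_congr rfl fun k _ => hpsi k, Finset.sum_comm]
    refine Finset.sum_congr rfl fun A _ => ?_
    by_cases hcA : ∀ i : Fin n, A i ≤ (a : ℤ) - 1 + (c : ℤ) * ((i : ℕ) : ℤ)
    · rw [if_pos hcA]
      set m : ℕ := (Finset.univ.filter (fun i : Fin n =>
          A i = (a : ℤ) - 1 + (c : ℤ) * ((i : ℕ) : ℤ))).card with hm
      have hmn : m ≤ n := le_trans (Finset.card_filter_le _ _) (by simp)
      have hterm : ∀ k ∈ Finset.range (n+1),
          (if (∀ i : Fin n, A i ≤ (a : ℤ) - 1 + (c : ℤ) * ((i : ℕ) : ℤ)) ∧ m = n - k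
            then KostantPF n (kMult n a b c) (netflow n (extFin n A)) else 0)
          = (if k = n - m
            then KostantPF n (kMult n a b c) (netflow n (extFin n A)) else 0) := by
        intro k hk
        have hk' : k ≤ n := by simp at hk; omega
        exact if_congr ⟨fun h => by omega, fun h => ⟨hcA, by omega⟩⟩ rfl rfl
      rw [Finset.sum_congr rfl hterm, Finset.sum_ite_eq' (Finset.range (n+1)) (n-m)]
      rw [if_pos (Finset.mem_range.mpr (by omega))]
    · rw [if_neg hcA]
      exact Finset.sum_eq_zero fun k _ => if_neg (by tauto)
  rw [hB, KostantPF_def]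
  -- Step C: fiberwise count on the right
  haveI : Finite {f // IsFlow n (kMult n a (b+1) c) (netflow n (tvec a c)) f} :=
    flow_finite n _ _
  haveI : Fintype {f // IsFlow n (kMult n a (b+1) c) (netflow n (tvec a c)) f} :=
    Fintype.ofFinite _
  have hmaps : ∀ F : {f // IsFlow n (kMult n a (b+1) c) (netflow n (tvec a c)) f},
      (fun i : Fin n => tvec a c ((i:ℕ)+1) - (F.1 ((i:ℕ)+1) (n+1) b : ℤ)) ∈ box := by
    intro F
    rw [hbox, Finset.mem_Icc]
    constructor
    · intro i
      show -S ≤ tvec a c ((i:ℕ)+1) - (F.1 ((i:ℕ)+1) (n+1) b : ℤ)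
      have h1 := extra_bound F.2 (Nat.succ_le_succ (Nat.zero_le _)) i.isLt
      have h2 : ∑ u ∈ range ((i:ℕ)+1+1), netflow n (tvec a c) u ≤ S := by
        rw [hS]
        exact prefix_le_S _ (by rw [netflow_zero]; positivity)
          (fun u hu1 hu2 => netflow_tvec_le u hu1 hu2) i.isLt
      have h3 : 0 ≤ tvec a c ((i:ℕ)+1) := by
        rw [tvec_fin]
        have h4 : (1:ℤ) ≤ a := by exact_mod_cast ha
        have h5 : (0:ℤ) ≤ (c:ℤ) * ((i:ℕ):ℤ) := by positivity
        linarith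
      linarith
    · intro i
      show tvec a c ((i:ℕ)+1) - (F.1 ((i:ℕ)+1) (n+1) b : ℤ)
        ≤ (a:ℤ) - 1 + (c:ℤ) * ((i:ℕ):ℤ)
      rw [← tvec_fin a c i]
      have : (0:ℤ) ≤ (F.1 ((i:ℕ)+1) (n+1) b : ℤ) := by positivity
      linarith
  rw [Nat.card_eq_fintype_card, ← Finset.card_univ]
  rw [Finset.card_eq_sum_card_fiberwise (fun F _ => hmaps F)]
  refine Finset.sum_congr rfl fun A _ => ?_
  have hfilt : (Finset.univ.filter (fun F : {f // IsFlow n (kMult n a (b+1) c)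
      (netflow n (tvec a c)) f} =>
      (fun i : Fin n => tvec a c ((i:ℕ)+1) - (F.1 ((i:ℕ)+1) (n+1) b : ℤ)) = A)).card
      = Nat.card {F : {f // IsFlow n (kMult n a (b+1) c) (netflow n (tvec a c)) f} //
        (fun i : Fin n => tvec a c ((i:ℕ)+1) - (F.1 ((i:ℕ)+1) (n+1) b : ℤ)) = A} := by
    rw [Nat.card_eq_fintype_card, Fintype.card_subtype]
  rw [hfilt]
  by_cases hcA : ∀ i : Fin n, A i ≤ (a : ℤ) - 1 + (c : ℤ) * ((i : ℕ) : ℤ)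
  · rw [if_pos hcA, fiber_card A hcA, KostantPF_def]
  · rw [if_neg hcA, fiber_empty A hcA]
end

section
/- Let n ≥ 1 and let G be a multigraph on vertex set {0,1,…,n+1} all of whose edges (i,j) satisfy i < j, such that vertex 0 has at least one outgoing edge, every vertex v ∈ {1,…,n} has at least one incoming edge and exactly one outgoing edge. Set d_i = indeg_G(i) − 1 for i ∈ {1,…,n}. Then K_G(0, d_1, …, d_n, −(d_1+⋯+d_n)) = 1. -/
open Finset

set_option linter.unusedVariables false in
private lemma sum_eq_one_aux {s : Finset ℕ} {g : ℕ → ℕ} (h : ∑ j ∈ s, g j = 1) :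
    ∃ j ∈ s, g j = 1 ∧ ∀ i ∈ s, i ≠ j → g i = 0 := by
  have h0 : ∑ j ∈ s, g j ≠ 0 := by omega
  obtain ⟨j, hj, hgj⟩ := Finset.exists_ne_zero_of_sum_ne_zero h0
  have h2 : g j + ∑ i ∈ s.erase j, g i = 1 := by
    rw [Finset.add_sum_erase s g hj]; exact h
  have hz : ∑ i ∈ s.erase j, g i = 0 := by omega
  exact ⟨j, hj, by omega, fun i hi hij =>
    (Finset.sum_eq_zero_iff.mp hz) i (Finset.mem_erase.mpr ⟨hij, hi⟩)⟩

noncomputable def outF (n : ℕ) (mult : ℕ → ℕ → ℕ) : ℕ → ℕ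
  | v =>
      (∑ i ∈ (Finset.range v).attach,
        if 1 ≤ i.1 ∧ mult i.1 v ≠ 0 then outF n mult i.1 else 0) +
      ((∑ i ∈ Finset.range (n + 2), mult i v) - 1)
  termination_by v => v
  decreasing_by exact Finset.mem_range.mp i.2

lemma outF_spec (n : ℕ) (mult : ℕ → ℕ → ℕ) (v : ℕ) :
    outF n mult v =
      (∑ i ∈ Finset.range v, if 1 ≤ i ∧ mult i v ≠ 0 then outF n mult i else 0) +
      ((∑ i ∈ Finset.range (n + 2), mult i v) - 1) := by
  rw [outF]
  congr 1
  exact Finset.sum_attach (Finset.range v)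
    (fun i => if 1 ≤ i ∧ mult i v ≠ 0 then outF n mult i else 0)

noncomputable def flow0 (n : ℕ) (mult : ℕ → ℕ → ℕ) : ℕ → ℕ → ℕ → ℕ :=
  fun i j t => if 1 ≤ i ∧ i ≤ n ∧ mult i j ≠ 0 ∧ t = 0 then outF n mult i else 0

lemma flow0_inner (n : ℕ) (mult : ℕ → ℕ → ℕ) (i j : ℕ) :
    ∑ t ∈ Finset.range (mult i j), flow0 n mult i j t =
      if 1 ≤ i ∧ i ≤ n ∧ mult i j ≠ 0 then outF n mult i else 0 := by
  rcases Nat.eq_zero_or_pos (mult i j) with h | h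
  · simp [h]
  · have hne : mult i j ≠ 0 := by omega
    have hrw : ∀ t, flow0 n mult i j t =
        if t = 0 then (if 1 ≤ i ∧ i ≤ n then outF n mult i else 0) else 0 := by
      intro t; unfold flow0; split_ifs <;> tauto
    rw [Finset.sum_congr rfl fun t _ => hrw t,
      Finset.sum_ite_eq' (Finset.range (mult i j)) 0]
    simp [h, hne]

lemma flow_unique (n : ℕ) (mult : ℕ → ℕ → ℕ)
    (hsupp : ∀ i j, mult i j ≠ 0 → i < j ∧ j ≤ n + 1)
    (hout : ∀ v, 1 ≤ v → v ≤ n → ∑ j ∈ Finset.range (n + 2), mult v j = 1)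
    (b : ℕ → ℤ) (hb0 : b 0 = 0)
    (f f' : ℕ → ℕ → ℕ → ℕ)
    (hf1 : ∀ i j t, f i j t ≠ 0 → t < mult i j ∧ i < j ∧ j ≤ n + 1)
    (hf'1 : ∀ i j t, f' i j t ≠ 0 → t < mult i j ∧ i < j ∧ j ≤ n + 1)
    (hf2 : ∀ v ≤ n + 1,
      (∑ j ∈ Finset.range (n + 2), ∑ t ∈ Finset.range (mult v j), (f v j t : ℤ)) -
      (∑ i ∈ Finset.range (n + 2), ∑ t ∈ Finset.range (mult i v), (f i v t : ℤ)) = b v)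
    (hf'2 : ∀ v ≤ n + 1,
      (∑ j ∈ Finset.range (n + 2), ∑ t ∈ Finset.range (mult v j), (f' v j t : ℤ)) -
      (∑ i ∈ Finset.range (n + 2), ∑ t ∈ Finset.range (mult i v), (f' i v t : ℤ)) = b v) :
    f = f' := by
  have key : ∀ i j t, f i j t = f' i j t := by
    intro i
    induction i using Nat.strong_induction_on with
    | _ i ih =>
      by_cases hi0 : i = 0
      · subst hi0
        have hin0 : ∀ g : ℕ → ℕ → ℕ → ℕ,
            (∑ i ∈ Finset.range (n + 2), ∑ t ∈ Finset.range (mult i 0), (g i 0 t : ℤ)) = 0 := by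
          intro g
          apply Finset.sum_eq_zero; intro i _
          have hm : mult i 0 = 0 := by
            by_contra h; exact absurd (hsupp i 0 h).1 (by omega)
          simp [hm]
        have hzero : ∀ (g : ℕ → ℕ → ℕ → ℕ),
            (∀ i j t, g i j t ≠ 0 → t < mult i j ∧ i < j ∧ j ≤ n + 1) →
            (∑ j ∈ Finset.range (n + 2), ∑ t ∈ Finset.range (mult 0 j), (g 0 j t : ℤ)) -
              (∑ i ∈ Finset.range (n + 2), ∑ t ∈ Finset.range (mult i 0), (g i 0 t : ℤ)) = b 0 →
            ∀ j t, g 0 j t = 0 := by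
          intro g hg1 hg2 j t
          rw [hin0 g, hb0, sub_zero] at hg2
          have hnat : ∑ j ∈ Finset.range (n + 2), ∑ t ∈ Finset.range (mult 0 j), g 0 j t = 0 := by
            exact_mod_cast hg2
          by_contra h
          obtain ⟨ht, hij, hjle⟩ := hg1 0 j t h
          have h1 := (Finset.sum_eq_zero_iff.mp hnat) j (Finset.mem_range.mpr (by omega))
          have h2 := (Finset.sum_eq_zero_iff.mp h1) t (Finset.mem_range.mpr ht)
          exact h h2
        intro j t
        rw [hzero f hf1 (hf2 0 (by omega)) j t, hzero f' hf'1 (hf'2 0 (by omega)) j t]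
      · by_cases hile : i ≤ n
        · -- main case 1 ≤ i ≤ n
          have hi1 : 1 ≤ i := by omega
          obtain ⟨j₀, hj₀mem, hj₀, hoth⟩ := sum_eq_one_aux (hout i hi1 hile)
          have hInEq :
              (∑ i' ∈ Finset.range (n + 2), ∑ t ∈ Finset.range (mult i' i), (f i' i t : ℤ)) =
              (∑ i' ∈ Finset.range (n + 2), ∑ t ∈ Finset.range (mult i' i), (f' i' i t : ℤ)) := by
            apply Finset.sum_congr rfl; intro i' _
            apply Finset.sum_congr rfl; intro t ht
            have hm : mult i' i ≠ 0 := by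
              have := Finset.mem_range.mp ht; omega
            have hlt : i' < i := (hsupp i' i hm).1
            rw [ih i' hlt i t]
          have hsingle : ∀ g : ℕ → ℕ → ℕ → ℕ,
              (∑ j ∈ Finset.range (n + 2), ∑ t ∈ Finset.range (mult i j), (g i j t : ℤ)) =
                (g i j₀ 0 : ℤ) := by
            intro g
            rw [Finset.sum_eq_single_of_mem j₀ hj₀mem
              (fun j hj hne => by rw [hoth j hj hne]; simp), hj₀]
            simp
          have houtEq : (f i j₀ 0 : ℤ) = (f' i j₀ 0 : ℤ) := by
            have h2 := hf2 i (by omega)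
            have h2' := hf'2 i (by omega)
            rw [hsingle f, hInEq] at h2
            rw [hsingle f'] at h2'
            linarith
          have hmain : f i j₀ 0 = f' i j₀ 0 := by exact_mod_cast houtEq
          intro j t
          by_cases hjt : j = j₀ ∧ t = 0
          · obtain ⟨rfl, rfl⟩ := hjt; exact hmain
          · have hzf : ∀ g : ℕ → ℕ → ℕ → ℕ,
                (∀ i j t, g i j t ≠ 0 → t < mult i j ∧ i < j ∧ j ≤ n + 1) → g i j t = 0 := by
              intro g hg1
              by_contra h
              obtain ⟨ht, hij, hjle⟩ := hg1 i j t h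
              by_cases hj : j = j₀
              · subst hj
                rw [hj₀] at ht
                exact hjt ⟨rfl, by omega⟩
              · have : mult i j = 0 := hoth j (Finset.mem_range.mpr (by omega)) hj
                omega
            rw [hzf f hf1, hzf f' hf'1]
        · -- i ≥ n+1
          intro j t
          have hzf : ∀ g : ℕ → ℕ → ℕ → ℕ,
              (∀ i j t, g i j t ≠ 0 → t < mult i j ∧ i < j ∧ j ≤ n + 1) → g i j t = 0 := by
            intro g hg1
            by_contra h
            obtain ⟨_, hij, hjle⟩ := hg1 i j t h
            omega
          rw [hzf f hf1, hzf f' hf'1]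
  funext i j t
  exact key i j t

lemma flow0_cond1 (n : ℕ) (mult : ℕ → ℕ → ℕ)
    (hsupp : ∀ i j, mult i j ≠ 0 → i < j ∧ j ≤ n + 1) :
    ∀ i j t, flow0 n mult i j t ≠ 0 → t < mult i j ∧ i < j ∧ j ≤ n + 1 := by
  intro i j t h
  unfold flow0 at h
  split_ifs at h with hc
  · obtain ⟨h1, h2, h3, h4⟩ := hc
    exact ⟨by omega, hsupp i j h3⟩
  · exact absurd rfl h

lemma flow0_in_nat (n : ℕ) (mult : ℕ → ℕ → ℕ)
    (hsupp : ∀ i j, mult i j ≠ 0 → i < j ∧ j ≤ n + 1)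
    (v : ℕ) (hv : v ≤ n + 1) :
    ∑ i ∈ Finset.range (n + 2), ∑ t ∈ Finset.range (mult i v), flow0 n mult i v t =
      ∑ i ∈ Finset.range v, if 1 ≤ i ∧ mult i v ≠ 0 then outF n mult i else 0 := by
  have hstep : ∑ i ∈ Finset.range (n + 2), ∑ t ∈ Finset.range (mult i v), flow0 n mult i v t =
      ∑ i ∈ Finset.range (n + 2), if 1 ≤ i ∧ i ≤ n ∧ mult i v ≠ 0 then outF n mult i else 0 :=
    Finset.sum_congr rfl fun i _ => flow0_inner n mult i v
  rw [hstep]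
  rw [← Finset.sum_subset (Finset.range_subset_range.mpr (by omega : v ≤ n + 2))]
  · apply Finset.sum_congr rfl
    intro i hi
    have hiv : i < v := Finset.mem_range.mp hi
    have : i ≤ n := by omega
    simp [this]
  · intro i _ hnot
    have hiv : ¬ i < v := by simpa using hnot
    have hm : mult i v = 0 := by
      by_contra h; exact hiv ((hsupp i v h).1)
    simp [hm]

lemma flow0_cond2 (n : ℕ) (mult : ℕ → ℕ → ℕ)
    (hsupp : ∀ i j, mult i j ≠ 0 → i < j ∧ j ≤ n + 1)
    (hin : ∀ v, 1 ≤ v → v ≤ n → 0 < ∑ i ∈ Finset.range (n + 2), mult i v)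
    (hout : ∀ v, 1 ≤ v → v ≤ n → ∑ j ∈ Finset.range (n + 2), mult v j = 1) :
    ∀ v ≤ n + 1,
      (∑ j ∈ Finset.range (n + 2), ∑ t ∈ Finset.range (mult v j), (flow0 n mult v j t : ℤ)) -
      (∑ i ∈ Finset.range (n + 2), ∑ t ∈ Finset.range (mult i v), (flow0 n mult i v t : ℤ)) =
      nuFlow n mult v := by
  -- abbreviation for the net flow of flow0 at a vertex
  set g : ℕ → ℤ := fun v =>
    (∑ j ∈ Finset.range (n + 2), ∑ t ∈ Finset.range (mult v j), (flow0 n mult v j t : ℤ)) -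
    (∑ i ∈ Finset.range (n + 2), ∑ t ∈ Finset.range (mult i v), (flow0 n mult i v t : ℤ))
    with hg
  have hInCast : ∀ v, v ≤ n + 1 →
      (∑ i ∈ Finset.range (n + 2), ∑ t ∈ Finset.range (mult i v), (flow0 n mult i v t : ℤ)) =
      ((∑ i ∈ Finset.range v, if 1 ≤ i ∧ mult i v ≠ 0 then outF n mult i else 0 : ℕ) : ℤ) := by
    intro v hv
    rw [← flow0_in_nat n mult hsupp v hv]
    push_cast
    rfl
  -- case 1 ≤ v ≤ n
  have hmid : ∀ v, 1 ≤ v → v ≤ n → g v = (∑ i ∈ Finset.range (n + 2), (mult i v : ℤ)) - 1 := by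
    intro v h1 h2
    have hOut : (∑ j ∈ Finset.range (n + 2), ∑ t ∈ Finset.range (mult v j), (flow0 n mult v j t : ℤ)) =
        ((outF n mult v : ℕ) : ℤ) := by
      obtain ⟨j₀, hj₀mem, hj₀, hoth⟩ := sum_eq_one_aux (hout v h1 h2)
      have hstep : ∀ j, (∑ t ∈ Finset.range (mult v j), (flow0 n mult v j t : ℤ)) =
          ((if 1 ≤ v ∧ v ≤ n ∧ mult v j ≠ 0 then outF n mult v else 0 : ℕ) : ℤ) := by
        intro j
        rw [← flow0_inner n mult v j]
        push_cast
        rfl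
      rw [Finset.sum_congr rfl fun j _ => hstep j,
        Finset.sum_eq_single_of_mem j₀ hj₀mem (fun j hj hne => by rw [hoth j hj hne]; simp)]
      simp [h1, h2, hj₀]
    rw [hg]
    simp only
    rw [hOut, hInCast v (by omega)]
    have hspec := outF_spec n mult v
    have hd : 1 ≤ ∑ i ∈ Finset.range (n + 2), mult i v := hin v h1 h2
    have hcast : ((∑ i ∈ Finset.range (n + 2), mult i v : ℕ) : ℤ) =
        ∑ i ∈ Finset.range (n + 2), (mult i v : ℤ) := by push_cast; rfl
    omega
  -- case v = 0
  have h0 : g 0 = 0 := by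
    rw [hg]
    simp only
    have hO : (∑ j ∈ Finset.range (n + 2), ∑ t ∈ Finset.range (mult 0 j), (flow0 n mult 0 j t : ℤ)) = 0 :=
      Finset.sum_eq_zero fun j _ => Finset.sum_eq_zero fun t _ => by simp [flow0]
    have hI : (∑ i ∈ Finset.range (n + 2), ∑ t ∈ Finset.range (mult i 0), (flow0 n mult i 0 t : ℤ)) = 0 := by
      apply Finset.sum_eq_zero; intro i _
      have hm : mult i 0 = 0 := by
        by_contra h; exact absurd (hsupp i 0 h).1 (by omega)
      simp [hm]
    rw [hO, hI]; ring
  -- conservation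
  have hcons : ∑ v ∈ Finset.range (n + 2), g v = 0 := by
    rw [hg]
    simp only
    rw [Finset.sum_sub_distrib]
    rw [Finset.sum_comm (s := Finset.range (n + 2)) (t := Finset.range (n + 2))
      (f := fun v i => ∑ t ∈ Finset.range (mult i v), (flow0 n mult i v t : ℤ))]
    exact sub_self _
  -- nuFlow values
  have hnu0 : nuFlow n mult 0 = 0 := by simp [nuFlow, netflow]
  have hnuMid : ∀ v, 1 ≤ v → v ≤ n →
      nuFlow n mult v = (∑ i ∈ Finset.range (n + 2), (mult i v : ℤ)) - 1 := by
    intro v h1 h2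
    have hv0 : v ≠ 0 := by omega
    simp [nuFlow, netflow, hv0, h2]
  have hrange : Finset.range (n + 1) = insert 0 (Finset.Icc 1 n) := by
    ext x; simp only [Finset.mem_range, Finset.mem_insert, Finset.mem_Icc]; omega
  -- case v = n+1
  have htop : g (n + 1) = nuFlow n mult (n + 1) := by
    have hsum : ∑ v ∈ Finset.range (n + 2), g v =
        (∑ v ∈ Finset.range (n + 1), g v) + g (n + 1) := Finset.sum_range_succ g (n + 1)
    have hlow : ∑ v ∈ Finset.range (n + 1), g v =
        ∑ v ∈ Finset.Icc 1 n, ((∑ i ∈ Finset.range (n + 2), (mult i v : ℤ)) - 1) := by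
      rw [hrange, Finset.sum_insert (by simp)]
      rw [h0, zero_add]
      apply Finset.sum_congr rfl
      intro v hv
      have := Finset.mem_Icc.mp hv
      exact hmid v this.1 this.2
    have hnutop : nuFlow n mult (n + 1) =
        -(∑ v ∈ Finset.Icc 1 n, ((∑ i ∈ Finset.range (n + 2), (mult i v : ℤ)) - 1)) := by
      simp [nuFlow, netflow]
    rw [hnutop]
    have := hcons
    rw [hsum, hlow] at this
    linarith
  intro v hv
  by_cases hv0 : v = 0
  · subst hv0; exact h0.trans hnu0.symm
  · by_cases hvn : v ≤ n
    · exact (hmid v (by omega) hvn).trans (hnuMid v (by omega) hvn).symm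
    · have : v = n + 1 := by omega
      subst this
      exact htop

theorem stmt7 (n : ℕ) (hn : 1 ≤ n) (mult : ℕ → ℕ → ℕ)
    (hsupp : ∀ i j, mult i j ≠ 0 → i < j ∧ j ≤ n + 1)
    (h0 : 0 < ∑ j ∈ Finset.range (n + 2), mult 0 j)
    (hin : ∀ v, 1 ≤ v → v ≤ n → 0 < ∑ i ∈ Finset.range (n + 2), mult i v)
    (hout : ∀ v, 1 ≤ v → v ≤ n → ∑ j ∈ Finset.range (n + 2), mult v j = 1) :
    KostantPF n mult (nuFlow n mult) = 1 := by
  have hb0 : nuFlow n mult 0 = 0 := by simp [nuFlow, netflow]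
  unfold KostantPF
  rw [Nat.card_eq_one_iff_unique]
  refine ⟨⟨fun a b => ?_⟩, ⟨⟨flow0 n mult,
    flow0_cond1 n mult hsupp, flow0_cond2 n mult hsupp hin hout⟩⟩⟩
  obtain ⟨f, hf1, hf2⟩ := a
  obtain ⟨f', hf'1, hf'2⟩ := b
  exact Subtype.ext (flow_unique n mult hsupp hout _ hb0 f f' hf1 hf'1 hf2 hf'2)
end

section
/- Let n ≥ 2, b ≥ 1, c ≥ 0 be integers and let a_2, …, a_n be integers. Then K_{k_{n+2}^{1,b,c}}(0, 0, a_2, …, a_n, −(a_2+⋯+a_n)) = K_{k_{n+1}^{c+1,b,c}}(0, a_2, …, a_n, −(a_2+⋯+a_n)), where on the right-hand side the internal vertices 1, …, n−1 of k_{n+1}^{c+1,b,c} receive net flows a_2, …, a_n respectively. -/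
open Finset

def Cond (N : ℕ) (mult : ℕ → ℕ → ℕ) (bv : ℕ → ℤ) (f : ℕ → ℕ → ℕ → ℕ) : Prop :=
  (∀ i j t, f i j t ≠ 0 → t < mult i j ∧ i < j ∧ j ≤ N + 1) ∧
  (∀ v ≤ N + 1,
    (∑ j ∈ Finset.range (N + 2), ∑ t ∈ Finset.range (mult v j), (f v j t : ℤ)) -
    (∑ i ∈ Finset.range (N + 2), ∑ t ∈ Finset.range (mult i v), (f i v t : ℤ)) = bv v)

lemma KostantPF_eq (N : ℕ) (mult : ℕ → ℕ → ℕ) (bv : ℕ → ℤ) :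
    KostantPF N mult bv = Nat.card {f // Cond N mult bv f} := rfl

lemma kMult_right_zero (N a b c i : ℕ) : kMult N a b c i 0 = 0 := by
  unfold kMult; split_ifs <;> first | rfl | omega | simp_all

lemma kMult_to_one (N a b c i : ℕ) (hi : 1 ≤ i) : kMult (N + 1) a b c i 1 = 0 := by
  unfold kMult; split_ifs <;> first | rfl | omega | simp_all

lemma kMult_shift (m b c i j : ℕ) (hi : 1 ≤ i) :
    kMult (m + 1) 1 b c (i + 1) (j + 1) = kMult m (c + 1) b c i j := by
  unfold kMult; split_ifs <;> first | rfl | omega | simp_all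

/-- If a vertex has zero net flow and zero inflow, all its outflows vanish. -/
lemma vertex_out_zero {N : ℕ} {mult : ℕ → ℕ → ℕ} {bv : ℕ → ℤ} {f : ℕ → ℕ → ℕ → ℕ}
    (h : Cond N mult bv f) (v : ℕ) (hv : v ≤ N + 1) (hbv : bv v = 0)
    (hin : (∑ i ∈ Finset.range (N + 2), ∑ t ∈ Finset.range (mult i v), (f i v t : ℤ)) = 0) :
    ∀ j t, f v j t = 0 := by
  intro j t
  by_contra hne
  obtain ⟨ht, hij, hjN⟩ := h.1 _ _ _ hne
  have hout : (∑ j ∈ Finset.range (N + 2), ∑ t ∈ Finset.range (mult v j), (f v j t : ℤ)) = 0 := by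
    have := h.2 v hv
    omega
  have h1 := (Finset.sum_eq_zero_iff_of_nonneg
    (fun j _ => Finset.sum_nonneg fun t _ => Int.natCast_nonneg _)).mp hout j
    (Finset.mem_range.mpr (by omega))
  have h2 := (Finset.sum_eq_zero_iff_of_nonneg
    (fun t _ => Int.natCast_nonneg _)).mp h1 t (Finset.mem_range.mpr ht)
  exact hne (by exact_mod_cast h2)

lemma zero_vertex {N a b c : ℕ} {A : ℕ → ℤ} {f : ℕ → ℕ → ℕ → ℕ}
    (hf : Cond N (kMult N a b c) (netflow N A) f) : ∀ j t, f 0 j t = 0 := by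
  refine vertex_out_zero hf 0 (by omega) (by simp [netflow]) ?_
  exact Finset.sum_eq_zero fun i _ => by rw [kMult_right_zero]; simp

lemma one_vertex {m a b c : ℕ} {A : ℕ → ℤ} {f : ℕ → ℕ → ℕ → ℕ}
    (hf : Cond (m + 1) (kMult (m + 1) a b c) (netflow (m + 1) A) f) (hA : A 1 = 0) :
    ∀ j t, f 1 j t = 0 := by
  refine vertex_out_zero hf 1 (by omega)
    (by simp only [netflow]; rw [if_neg (by omega), if_pos (by omega), hA]) ?_
  refine Finset.sum_eq_zero fun i _ => ?_
  rcases Nat.eq_zero_or_pos i with rfl | hi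
  · exact Finset.sum_eq_zero fun t _ => by simp [zero_vertex hf]
  · rw [kMult_to_one _ _ _ _ _ hi]; simp

lemma icc_shift (aSeq : ℕ → ℤ) (m : ℕ) :
    (∑ i ∈ Finset.Icc 1 (m + 1), if i = 1 then (0 : ℤ) else aSeq i) =
      ∑ i ∈ Finset.Icc 1 m, aSeq (i + 1) := by
  induction m with
  | zero => simp
  | succ k ih =>
      rw [Finset.sum_Icc_succ_top (by omega) (fun i => if i = 1 then (0 : ℤ) else aSeq i),
        Finset.sum_Icc_succ_top (by omega) (fun i => aSeq (i + 1)), ih, if_neg (by omega)]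

lemma netflow_shift (m : ℕ) (aSeq : ℕ → ℤ) (v : ℕ) (hv1 : 1 ≤ v) (hv : v ≤ m + 1) :
    netflow (m + 1) (fun w => if w = 1 then 0 else aSeq w) (v + 1) =
      netflow m (fun w => aSeq (w + 1)) v := by
  rcases Nat.lt_or_ge v (m + 1) with h | h
  · simp only [netflow]
    split_ifs <;> first | rfl | omega | simp_all
  · have : v = m + 1 := by omega
    subst this
    simp only [netflow]
    rw [if_neg (by omega), if_neg (by omega), if_neg (by omega), if_neg (by omega),
      neg_inj]
    exact icc_shift aSeq m

lemma fwd_mem (m b c : ℕ) (aSeq : ℕ → ℤ) (f g : ℕ → ℕ → ℕ → ℕ)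
    (hf : Cond (m + 1) (kMult (m + 1) 1 b c)
      (netflow (m + 1) (fun v => if v = 1 then 0 else aSeq v)) f)
    (hg : ∀ i j t, g i j t = f (i + 1) (j + 1) t) :
    Cond m (kMult m (c + 1) b c) (netflow m (fun v => aSeq (v + 1))) g := by
  have hz0 : ∀ j t, f 0 j t = 0 := zero_vertex hf
  have hz1 : ∀ j t, f 1 j t = 0 := one_vertex hf (by simp)
  constructor
  · intro i j t hne
    rw [hg] at hne
    have h1 := hf.1 _ _ _ hne
    have hi : 1 ≤ i := by
      by_contra h
      have : i = 0 := by omega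
      subst this
      exact hne (hz1 _ _)
    rw [kMult_shift m b c i j hi] at h1
    exact ⟨h1.1, by omega, by omega⟩
  · intro v hv
    simp only [hg]
    rcases Nat.eq_zero_or_pos v with rfl | hv1
    · have e1 : (∑ j ∈ Finset.range (m + 2),
          ∑ t ∈ Finset.range (kMult m (c + 1) b c 0 j), ((f (0 + 1) (j + 1) t : ℕ) : ℤ)) = 0 :=
        Finset.sum_eq_zero fun j _ => Finset.sum_eq_zero fun t _ => by simp [hz1]
      have e2 : (∑ i ∈ Finset.range (m + 2),
          ∑ t ∈ Finset.range (kMult m (c + 1) b c i 0), ((f (i + 1) (0 + 1) t : ℕ) : ℤ)) = 0 :=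
        Finset.sum_eq_zero fun i _ => by rw [kMult_right_zero]; simp
      rw [e1, e2]
      simp [netflow]
    · have key := hf.2 (v + 1) (by omega)
      have hout : (∑ j ∈ Finset.range (m + 1 + 2),
          ∑ t ∈ Finset.range (kMult (m + 1) 1 b c (v + 1) j), ((f (v + 1) j t : ℕ) : ℤ)) =
          ∑ j ∈ Finset.range (m + 2),
          ∑ t ∈ Finset.range (kMult m (c + 1) b c v j), ((f (v + 1) (j + 1) t : ℕ) : ℤ) := by
        rw [show m + 1 + 2 = (m + 2) + 1 from by omega, Finset.sum_range_succ',
          kMult_right_zero]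
        simp only [Finset.range_zero, Finset.sum_empty, add_zero]
        exact Finset.sum_congr rfl fun j _ => by rw [kMult_shift m b c v j hv1]
      have hin : (∑ i ∈ Finset.range (m + 1 + 2),
          ∑ t ∈ Finset.range (kMult (m + 1) 1 b c i (v + 1)), ((f i (v + 1) t : ℕ) : ℤ)) =
          ∑ i ∈ Finset.range (m + 2),
          ∑ t ∈ Finset.range (kMult m (c + 1) b c i v), ((f (i + 1) (v + 1) t : ℕ) : ℤ) := by
        rw [show m + 1 + 2 = (m + 2) + 1 from by omega, Finset.sum_range_succ',
          show (∑ t ∈ Finset.range (kMult (m + 1) 1 b c 0 (v + 1)),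
            ((f 0 (v + 1) t : ℕ) : ℤ)) = 0 from
            Finset.sum_eq_zero fun t _ => by simp [hz0], add_zero]
        refine Finset.sum_congr rfl fun i _ => ?_
        rcases Nat.eq_zero_or_pos i with rfl | hi
        · refine Eq.trans (Finset.sum_eq_zero fun t _ => ?_)
            (Eq.symm (Finset.sum_eq_zero fun t _ => ?_)) <;> simp [hz1]
        · rw [kMult_shift m b c i v hi]
      rw [hout, hin] at key
      rw [key]
      exact netflow_shift m aSeq v hv1 hv

lemma bwd_mem (m b c : ℕ) (aSeq : ℕ → ℤ) (g f : ℕ → ℕ → ℕ → ℕ)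
    (hgc : Cond m (kMult m (c + 1) b c) (netflow m (fun v => aSeq (v + 1))) g)
    (hf : ∀ i j t, f i j t = if 2 ≤ i then g (i - 1) (j - 1) t else 0) :
    Cond (m + 1) (kMult (m + 1) 1 b c)
      (netflow (m + 1) (fun v => if v = 1 then 0 else aSeq v)) f := by
  have hz0g : ∀ j t, g 0 j t = 0 := zero_vertex hgc
  have hf01 : ∀ i j t, i ≤ 1 → f i j t = 0 := fun i j t hi => by
    rw [hf, if_neg (by omega)]
  constructor
  · intro i j t hne
    rw [hf] at hne
    by_cases h2 : 2 ≤ i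
    · rw [if_pos h2] at hne
      have h1 := hgc.1 _ _ _ hne
      have hij : i - 1 < j - 1 := h1.2.1
      have hi1 : 1 ≤ i - 1 := by
        by_contra h
        have : i - 1 = 0 := by omega
        rw [this] at hne
        exact hne (hz0g _ _)
      have e1 : i - 1 + 1 = i := by omega
      have e2 : j - 1 + 1 = j := by omega
      refine ⟨?_, by omega, by omega⟩
      rw [← e1, ← e2, kMult_shift m b c _ _ hi1]
      exact h1.1
    · rw [if_neg h2] at hne; exact absurd rfl hne
  · intro v hv
    rcases Nat.lt_or_ge v 2 with hv2 | hv2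
    · have h1 : (∑ j ∈ Finset.range (m + 1 + 2),
          ∑ t ∈ Finset.range (kMult (m + 1) 1 b c v j), ((f v j t : ℕ) : ℤ)) = 0 :=
        Finset.sum_eq_zero fun j _ => Finset.sum_eq_zero fun t _ => by
          simp [hf01 v j t (by omega)]
      have h2 : (∑ i ∈ Finset.range (m + 1 + 2),
          ∑ t ∈ Finset.range (kMult (m + 1) 1 b c i v), ((f i v t : ℕ) : ℤ)) = 0 := by
        refine Finset.sum_eq_zero fun i _ => Finset.sum_eq_zero fun t _ => ?_
        rcases Nat.lt_or_ge i 2 with hi2 | hi2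
        · simp [hf01 i v t (by omega)]
        · have hz : g (i - 1) (v - 1) t = 0 := by
            by_contra h
            have := hgc.1 _ _ _ h
            omega
          rw [hf, if_pos hi2, hz]
          simp
      rw [h1, h2]
      interval_cases v <;> simp [netflow]
    · obtain ⟨w, rfl⟩ : ∃ w, v = w + 1 := ⟨v - 1, by omega⟩
      have hw1 : 1 ≤ w := by omega
      have key := hgc.2 w (by omega)
      have hout : (∑ j ∈ Finset.range (m + 1 + 2),
          ∑ t ∈ Finset.range (kMult (m + 1) 1 b c (w + 1) j), ((f (w + 1) j t : ℕ) : ℤ)) =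
          ∑ j ∈ Finset.range (m + 2),
          ∑ t ∈ Finset.range (kMult m (c + 1) b c w j), ((g w j t : ℕ) : ℤ) := by
        rw [show m + 1 + 2 = (m + 2) + 1 from by omega, Finset.sum_range_succ',
          kMult_right_zero]
        simp only [Finset.range_zero, Finset.sum_empty, add_zero]
        refine Finset.sum_congr rfl fun j _ => ?_
        rw [kMult_shift m b c w j hw1]
        refine Finset.sum_congr rfl fun t _ => ?_
        rw [hf, if_pos (by omega)]
        simp
      have hin : (∑ i ∈ Finset.range (m + 1 + 2),
          ∑ t ∈ Finset.range (kMult (m + 1) 1 b c i (w + 1)), ((f i (w + 1) t : ℕ) : ℤ)) =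
          ∑ i ∈ Finset.range (m + 2),
          ∑ t ∈ Finset.range (kMult m (c + 1) b c i w), ((g i w t : ℕ) : ℤ) := by
        rw [show m + 1 + 2 = (m + 2) + 1 from by omega, Finset.sum_range_succ',
          show (∑ t ∈ Finset.range (kMult (m + 1) 1 b c 0 (w + 1)),
            ((f 0 (w + 1) t : ℕ) : ℤ)) = 0 from
            Finset.sum_eq_zero fun t _ => by simp [hf01 0 (w + 1) t (by omega)], add_zero]
        refine Finset.sum_congr rfl fun i _ => ?_
        rcases Nat.eq_zero_or_pos i with rfl | hi
        · refine Eq.trans (Finset.sum_eq_zero fun t _ => ?_)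
            (Eq.symm (Finset.sum_eq_zero fun t _ => ?_))
          · simp [hf01 1 (w + 1) t (by omega)]
          · simp [hz0g]
        · rw [kMult_shift m b c i w hi]
          refine Finset.sum_congr rfl fun t _ => ?_
          rw [hf, if_pos (by omega)]
          simp
      rw [hout, hin, key]
      exact (netflow_shift m aSeq w hw1 (by omega)).symm

theorem stmt9 (n b c : ℕ) (hn : 2 ≤ n) (hb : 1 ≤ b) (aSeq : ℕ → ℤ) :
    KostantPF n (kMult n 1 b c)
        (netflow n (fun v => if v = 1 then 0 else aSeq v)) =
      KostantPF (n - 1) (kMult (n - 1) (c + 1) b c)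
        (netflow (n - 1) (fun v => aSeq (v + 1))) := by
  obtain ⟨m, rfl⟩ : ∃ m, n = m + 1 := ⟨n - 1, by omega⟩
  simp only [Nat.add_sub_cancel]
  rw [KostantPF_eq, KostantPF_eq]
  apply Nat.card_congr
  refine ⟨fun x => ⟨fun i j t => x.1 (i + 1) (j + 1) t,
      fwd_mem m b c aSeq x.1 _ x.2 fun _ _ _ => rfl⟩,
    fun y => ⟨fun i j t => if 2 ≤ i then y.1 (i - 1) (j - 1) t else 0,
      bwd_mem m b c aSeq y.1 _ y.2 fun _ _ _ => rfl⟩, ?_, ?_⟩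
  · intro x
    apply Subtype.ext
    funext i j t
    dsimp only
    by_cases h2 : 2 ≤ i
    · rw [if_pos h2, show i - 1 + 1 = i from by omega]
      rcases Nat.eq_zero_or_pos j with rfl | hj
      · have ha : x.1 i 1 t = 0 := by
          by_contra h; have := x.2.1 i 1 t h; omega
        have hbb : x.1 i 0 t = 0 := by
          by_contra h; have := x.2.1 i 0 t h; omega
        rw [show (0 : ℕ) - 1 + 1 = 1 from rfl, ha, hbb]
      · rw [show j - 1 + 1 = j from by omega]
    · rw [if_neg h2]
      rcases Nat.eq_zero_or_pos i with rfl | hi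
      · exact (zero_vertex x.2 j t).symm
      · have : i = 1 := by omega
        subst this
        exact (one_vertex x.2 (by simp) j t).symm
  · intro y
    apply Subtype.ext
    funext i j t
    dsimp only
    rcases Nat.eq_zero_or_pos i with rfl | hi
    · rw [if_neg (by omega)]
      exact (zero_vertex y.2 j t).symm
    · rw [if_pos (by omega)]
      simp
end

section
/- Let n ≥ 1, b ≥ 1 and c ≥ 0 be integers. Then M_n(1,b,c) = M_{n−1}(c+1,b,c), as an equality of real numbers. -/
open Finset

lemma morris_key (m : ℕ) (G H : ℕ → ℝ) (hG : ∀ j, G j ≠ 0) (hH : ∀ j, H j ≠ 0)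
    (hG0 : G 0 = 1) :
    ∏ j ∈ Finset.range (m + 1), (H (m + j) * G 1) / (G j * H j * G (j + 1))
      = ∏ j ∈ Finset.range m, (H (m + j + 1) * G 1) / (G (j + 2) * H j * G (j + 1)) := by
  simp only [Finset.prod_div_distrib, Finset.prod_mul_distrib]
  rw [Finset.prod_range_succ' (fun j => H (m + j)) m,
      Finset.prod_range_succ (fun _ => G 1) m,
      Finset.prod_range_succ' (fun j => G j) m,
      Finset.prod_range_succ (fun j => H j) m,
      Finset.prod_range_succ' (fun j => G (j + 1)) m, hG0]
  simp only [show ∀ x : ℕ, m + (x + 1) = m + x + 1 from fun x => by omega,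
    show ∀ x : ℕ, x + 1 + 1 = x + 2 from fun x => by omega]
  have h1 : ∀ (f : ℕ → ℝ), (∀ j, f j ≠ 0) → ∏ j ∈ Finset.range m, f j ≠ 0 :=
    fun f hf => Finset.prod_ne_zero_iff.mpr fun j _ => hf j
  have A1 : ∏ x ∈ Finset.range m, G (x + 1) ≠ 0 := h1 _ fun j => hG (j + 1)
  have A2 : ∏ x ∈ Finset.range m, G (x + 2) ≠ 0 := h1 _ fun j => hG (j + 2)
  have A3 : ∏ x ∈ Finset.range m, H x ≠ 0 := h1 _ hH
  have A4 : H m ≠ 0 := hH m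
  have A5 : G 1 ≠ 0 := hG 1
  field_simp
  ring

theorem stmt11 (n b c : ℕ) (hn : 1 ≤ n) (hb : 1 ≤ b) :
    MorrisM n 1 b c = MorrisM (n - 1) (c + 1) b c := by
  obtain ⟨m, rfl⟩ : ∃ m, n = m + 1 := ⟨n - 1, (Nat.succ_pred_eq_of_pos hn).symm⟩
  have hb' : (1 : ℝ) ≤ (b : ℝ) := by exact_mod_cast hb
  set G : ℕ → ℝ := fun j => Real.Gamma ((j : ℝ) * c / 2 + 1) with hGdef
  set H : ℕ → ℝ := fun j => Real.Gamma ((b : ℝ) + (j : ℝ) * c / 2) with hHdef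
  have hG : ∀ j, G j ≠ 0 := fun j => (Real.Gamma_pos_of_pos (by positivity)).ne'
  have hH : ∀ j, H j ≠ 0 := fun j => by
    have hj : (0 : ℝ) ≤ (j : ℝ) * c / 2 := by positivity
    exact (Real.Gamma_pos_of_pos (by linarith)).ne'
  have hG0 : G 0 = 1 := by simp [hGdef, Real.Gamma_one]
  have hL : MorrisM (m + 1) 1 b c
      = ∏ j ∈ Finset.range (m + 1), (H (m + j) * G 1) / (G j * H j * G (j + 1)) := by
    refine Finset.prod_congr rfl fun j _ => ?_
    simp only [hGdef, hHdef]
    push_cast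
    ring_nf
  have hR : MorrisM (m + 1 - 1) (c + 1) b c
      = ∏ j ∈ Finset.range m, (H (m + j + 1) * G 1) / (G (j + 2) * H j * G (j + 1)) := by
    rw [Nat.add_sub_cancel]
    refine Finset.prod_congr rfl fun j _ => ?_
    simp only [hGdef, hHdef]
    push_cast
    ring_nf
  rw [hL, hR, morris_key m G H hG hH hG0]
end

section
/- The function n ↦ log(∏_{i=1}^{n−1} C_i) − n²·log 2 + (3/2)·n·log n is O(n) as n → ∞; that is, log(∏_{i=1}^{n−1} C_i) = n² log 2 − (3/2) n log n + O(n). -/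
open Finset

/-! Stirling's formula gives `log Cᵢ = 2i log 2 - (3/2) log (i + 1) - log √π + o(1)`, so summing over
`i < n` (with `C₀ = 1`) yields `n² log 2 - (3/2) log n! + O(n)`, and `n log n - n ≤ log n! ≤ n log n`
by `nⁿ/n! ≤ eⁿ` and `n! ≤ nⁿ`. -/

open Real Filter Topology Asymptotics Stirling
open scoped Nat

theorem Finset.prod_Icc_one_sub_one_eq_prod_range {M : Type*} [CommMonoid M] {f : ℕ → M} (h0 : f 0 = 1)
    (n : ℕ) : ∏ i ∈ Icc 1 (n - 1), f i = ∏ i ∈ range n, f i := by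
  cases n with
  | zero => simp
  | succ n =>
    rw [prod_range_succ', h0, mul_one, add_tsub_cancel_right, ← Ico_add_one_right_eq_Icc,
      prod_Ico_eq_prod_range, add_tsub_cancel_right]
    simp only [add_comm]

theorem Asymptotics.isBigO_sum_range_of_tendsto {E : Type*} [NormedAddCommGroup E]
    {f : ℕ → E} {L : E} (h : Tendsto f atTop (𝓝 L)) :
    (fun n => ∑ i ∈ range n, f i) =O[atTop] fun n => (n : ℝ) := by
  have hsmul : (fun n : ℕ => n • L) =O[atTop] fun n => (n : ℝ) :=
    IsBigO.of_bound ‖L‖ <| Eventually.of_forall fun n => by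
      simpa [mul_comm] using norm_nsmul_le (n := n) (a := L)
  refine ((isLittleO_sum_range_of_tendsto_zero (tendsto_sub_nhds_zero_iff.2 h)).isBigO.add
    hsmul).congr_left fun n => ?_
  rw [sum_sub_distrib, sum_const, card_range, sub_add_cancel]

theorem catalan_pos (n : ℕ) : 0 < catalan n :=
  Nat.pos_of_mul_pos_left (succ_mul_catalan_eq_centralBinom n ▸ n.centralBinom_pos)

theorem Real.log_catalan (n : ℕ) :
    log (catalan n) = log (2 * n)! - 2 * log n ! - log (n + 1) := by
  have hchoose := Nat.cast_choose ℝ (show n ≤ 2 * n by omega)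
  rw [show 2 * n - n = n by omega, ← Nat.centralBinom_eq_two_mul_choose,
    ← succ_mul_catalan_eq_centralBinom] at hchoose
  push_cast at hchoose
  have := congrArg log hchoose
  rw [log_mul (by positivity) (by exact_mod_cast (catalan_pos n).ne'),
    log_div (by positivity) (by positivity), log_mul (by positivity) (by positivity)] at this
  linarith

theorem Real.log_catalan_sub_eq_log_stirlingSeq {n : ℕ} (hn : n ≠ 0) :
    log (catalan n) - 2 * n * log 2 + 3 / 2 * log (n + 1) =
      log (stirlingSeq (2 * n)) - 2 * log (stirlingSeq n) + (log (n + 1) - log n) / 2 := by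
  have hn' : (n : ℝ) ≠ 0 := by exact_mod_cast hn
  have hlog2n : log (2 * n) = log 2 + log n := log_mul two_ne_zero hn'
  have hlog4n : log (2 * (2 * n)) = 2 * log 2 + log n := by
    rw [log_mul two_ne_zero (by positivity), hlog2n]; ring
  have hs1 := log_stirlingSeq_formula n
  have hs2 := log_stirlingSeq_formula (2 * n)
  rw [log_div hn' (exp_ne_zero 1), log_exp] at hs1
  push_cast at hs2
  rw [log_div (by positivity) (exp_ne_zero 1), log_exp, hlog4n, hlog2n] at hs2
  rw [log_catalan, hs1, hs2, hlog2n]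
  ring

theorem Real.tendsto_log_catalan_sub :
    Tendsto (fun n : ℕ => log (catalan n) - 2 * n * log 2 + 3 / 2 * log (n + 1)) atTop
      (𝓝 (-log √π)) := by
  have hs : Tendsto (fun n => log (stirlingSeq n)) atTop (𝓝 (log √π)) :=
    (continuousAt_log (by positivity)).tendsto.comp tendsto_stirlingSeq_sqrt_pi
  have hs2 : Tendsto (fun n : ℕ => log (stirlingSeq (2 * n))) atTop (𝓝 (log √π)) :=
    hs.comp (tendsto_id.const_mul_atTop' two_pos)
  have hlim := (hs2.sub (hs.const_mul 2)).add (tendsto_log_nat_add_one_sub_log.div_const 2)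
  rw [show log √π - 2 * log √π + 0 / 2 = -log √π by ring] at hlim
  refine hlim.congr' ?_
  filter_upwards [eventually_ne_atTop 0] with n hn
  exact (log_catalan_sub_eq_log_stirlingSeq hn).symm

theorem Real.mul_log_sub_log_factorial_le (n : ℕ) : n * log n - log n ! ≤ n := by
  rcases n.eq_zero_or_pos with rfl | hn
  · simp
  have hn' : (0 : ℝ) < n := by exact_mod_cast hn
  have h := log_le_log (by positivity) (pow_div_factorial_le_exp _ hn'.le n)
  rwa [log_exp, log_div (by positivity) (by positivity), log_pow] at h

theorem Real.log_factorial_le_mul_log (n : ℕ) : log n ! ≤ n * log n := by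
  rw [← log_pow]
  exact log_le_log (by positivity) (by exact_mod_cast n.factorial_le_pow)

-- With the extra `- log 2` the coefficients of `log 2` are `2i + 1`, which sum to `n²`.
theorem Real.log_prod_catalan (n : ℕ) :
    log (∏ i ∈ range n, (catalan i : ℝ)) - n ^ 2 * log 2 + 3 / 2 * log n ! =
      ∑ i ∈ range n, (log (catalan i) - 2 * i * log 2 + 3 / 2 * log (i + 1) - log 2) := by
  induction n with
  | zero => simp
  | succ n ih =>
    rw [prod_range_succ, sum_range_succ, ← ih, Nat.factorial_succ,
      log_mul (prod_ne_zero_iff.2 fun i _ => by exact_mod_cast (catalan_pos i).ne')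
        (by exact_mod_cast (catalan_pos n).ne'),
      Nat.cast_mul, log_mul (by positivity) (by positivity)]
    push_cast
    ring

theorem stmt19 :
    (fun n : ℕ =>
        Real.log (∏ i ∈ Finset.Icc 1 (n - 1), (catalan i : ℝ)) -
          (n : ℝ) ^ 2 * Real.log 2 + 3 / 2 * (n : ℝ) * Real.log (n : ℝ)) =O[Filter.atTop]
      (fun n : ℕ => (n : ℝ)) := by
  have hsum := isBigO_sum_range_of_tendsto (tendsto_log_catalan_sub.sub_const (log 2))
  have hfac : (fun n : ℕ => n * log n - log n !) =O[atTop] fun n => (n : ℝ) :=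
    IsBigO.of_bound 1 <| Eventually.of_forall fun n => by
      rw [norm_of_nonneg (sub_nonneg.2 (log_factorial_le_mul_log n)), one_mul,
        Real.norm_natCast]
      exact mul_log_sub_log_factorial_le n
  refine (hsum.add (hfac.const_mul_left (3 / 2))).congr_left fun n => ?_
  rw [prod_Icc_one_sub_one_eq_prod_range (by simp), ← log_prod_catalan]
  ring
end
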